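/- arXiv:1011.4833 — 2 statements merged into one kernel-verified Lean document; each statement's English description precedes it below -/
import Mathlib

section
/- For all formulas F, G, H, the following HT-equivalences hold: F ∧ (G × H) is HT-equivalent to (F ∧ G) × (F ∧ H); (F × G) ∧ H is HT-equivalent to (F ∧ H) × (G ∧ H); and F × (G ∧ H) is HT-equivalent to (F × G) ∧ (F × H). -/
inductive Form (α : Type) : Type
  | atom : α → Form α
  | fls  : Form α
  | and  : Form α → Form α → Form α
  | or   : Form α → Form α → Form α
  | imp  : Form α → Form α → Form α

namespace Form

variable {α : Type}

/-- ¬F abbreviates F → ⊥ -/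
def neg (F : Form α) : Form α := imp F fls

/-- ⊤ abbreviates ⊥ → ⊥ -/
def tru : Form α := imp fls fls

/-- ordered disjunction F × G := F ∨ (¬F ∧ G) -/
def ox (F G : Form α) : Form α := or F (and (neg F) G)

/-- classical satisfaction -/
def csat (T : Set α) : Form α → Prop
  | atom p  => p ∈ T
  | fls     => False
  | and F G => csat T F ∧ csat T G
  | or F G  => csat T F ∨ csat T G
  | imp F G => csat T F → csat T G

/-- here-and-there satisfaction (for interpretations ⟨H,T⟩ with H ⊆ T) -/
def htsat (H T : Set α) : Form α → Prop
  | atom p  => p ∈ H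
  | fls     => False
  | and F G => htsat H T F ∧ htsat H T G
  | or F G  => htsat H T F ∨ htsat H T G
  | imp F G => (csat T F → csat T G) ∧ (¬ htsat H T F ∨ htsat H T G)

end Form

/-- HT-equivalence: satisfied by exactly the same HT-interpretations -/
def HTEquiv {α : Type} (F G : Form α) : Prop :=
  ∀ H T : Set α, H ⊆ T → (Form.htsat H T F ↔ Form.htsat H T G)

/-- ⟨T,T⟩ is an equilibrium model of the theory Γ -/
def EqModel {α : Type} (Γ : Set (Form α)) (T : Set α) : Prop :=
  (∀ F ∈ Γ, Form.htsat T T F) ∧ ∀ H : Set α, H ⊂ T → ¬ (∀ F ∈ Γ, Form.htsat H T F)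

/-- iterated ordered disjunction, associated to the left; ⊥ when empty -/
def oxList {α : Type} : List (Form α) → Form α
  | []      => Form.fls
  | a :: as => as.foldl Form.ox a

/-- iterated disjunction, associated to the left; ⊥ when empty -/
def orList {α : Type} : List (Form α) → Form α
  | []      => Form.fls
  | a :: as => as.foldl Form.or a

/-- iterated conjunction, associated to the left; ⊤ when empty -/
def andList {α : Type} : List (Form α) → Form α
  | []      => Form.tru
  | a :: as => as.foldl Form.and a

/-! Satisfaction in ⟨H,T⟩ implies classical satisfaction by `T` (persistence). Hence `¬F` holds in
⟨H,T⟩ iff `T ⊭ F`, and `F × G` holds iff `F` does, or `T ⊭ F` and `G` holds. Each law is then a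
propositional tautology in the statements "`X` holds in ⟨H,T⟩" and "`T ⊨ X`", using only
persistence. -/

namespace Form

variable {α : Type} {H T : Set α}

theorem htsat.csat (hHT : H ⊆ T) {F : Form α} (hF : htsat H T F) : csat T F := by
  induction F with
  | atom p => exact hHT hF
  | fls => exact hF
  | and F G ihF ihG => exact ⟨ihF hF.1, ihG hF.2⟩
  | or F G ihF ihG => exact hF.imp ihF ihG
  | imp F G => exact hF.1

theorem htsat_neg_iff (hHT : H ⊆ T) {F : Form α} : htsat H T (neg F) ↔ ¬ csat T F := by
  simp only [neg, htsat, csat, or_false]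
  exact ⟨And.left, fun hF => ⟨hF, fun h => hF (h.csat hHT)⟩⟩

theorem htsat_ox_iff (hHT : H ⊆ T) {F G : Form α} :
    htsat H T (ox F G) ↔ htsat H T F ∨ (¬ csat T F ∧ htsat H T G) := by
  rw [ox, htsat, htsat, htsat_neg_iff hHT]

end Form

section

open Form

variable {α : Type}

theorem htEquiv_and_ox_distrib_left (F G K : Form α) :
    HTEquiv (and F (ox G K)) (ox (and F G) (and F K)) := by
  intro H T hHT
  have hF : htsat H T F → csat T F := htsat.csat hHT
  simp only [htsat_ox_iff hHT, htsat, csat]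
  tauto

theorem htEquiv_ox_and_distrib_right (F G K : Form α) :
    HTEquiv (and (ox F G) K) (ox (and F K) (and G K)) := by
  intro H T hHT
  have hK : htsat H T K → csat T K := htsat.csat hHT
  simp only [htsat_ox_iff hHT, htsat, csat]
  tauto

theorem htEquiv_ox_and_distrib (F G K : Form α) :
    HTEquiv (ox F (and G K)) (and (ox F G) (ox F K)) := by
  intro H T hHT
  simp only [htsat_ox_iff hHT, htsat]
  tauto

end

theorem ox_and_distributivity {α : Type} (F G K : Form α) :
    HTEquiv (Form.and F (Form.ox G K)) (Form.ox (Form.and F G) (Form.and F K)) ∧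
    HTEquiv (Form.and (Form.ox F G) K) (Form.ox (Form.and F K) (Form.and G K)) ∧
    HTEquiv (Form.ox F (Form.and G K)) (Form.and (Form.ox F G) (Form.ox F K)) :=
  ⟨htEquiv_and_ox_distrib_left F G K, htEquiv_ox_and_distrib_right F G K,
    htEquiv_ox_and_distrib F G K⟩
end

section
/- Regular disjunction does not left-distribute over ordered disjunction: for distinct atoms f, g, h, the theory {f ∨ (g × h), h} has exactly two equilibrium models, ⟨{g,h},{g,h}⟩ and ⟨{h},{h}⟩, whereas ⟨{f,h},{f,h}⟩ is an equilibrium model of the theory {(f ∨ g) × (f ∨ h), h}. In particular f ∨ (g × h) and (f ∨ g) × (f ∨ h) are not HT-equivalent. -/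
/-!
Since `F × G` holds in `⟨H, T⟩` iff `F` holds or `F` is classically false in `T` and `G` holds,
in `{f ∨ (g × h), h}` the atom `g` acts as a fact once `g ∈ T`, and otherwise the theory collapses
to `h`; in `{(f ∨ g) × (f ∨ h), h}` the model `{f, h}` forces `f` through the first disjunct.
HT-equivalent formulas can be exchanged inside a theory without changing its equilibrium models,
so `{f, h}` separates the two formulas.
-/

namespace Form

variable {α : Type}

theorem htsat_ox (H T : Set α) (F G : Form α) :
    htsat H T (ox F G) ↔ htsat H T F ∨ ¬ csat T F ∧ htsat H T G := by
  simp only [ox, neg, htsat, csat]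
  tauto

end Form

open Form

section EquilibriumModels

variable {α : Type} {Γ : Set (Form α)} {T : Set α}

theorem EqModel.eq_of_subset (hT : EqModel Γ T) {H : Set α} (hHT : H ⊆ T)
    (hH : ∀ F ∈ Γ, htsat H T F) : H = T :=
  by_contra fun hne => hT.2 H (hHT.ssubset_of_ne hne) hH

theorem EqModel.of_minimal (hT : ∀ F ∈ Γ, htsat T T F)
    (hmin : ∀ H ⊆ T, (∀ F ∈ Γ, htsat H T F) → T ⊆ H) : EqModel Γ T :=
  ⟨hT, fun H hHT hH => hHT.2 (hmin H hHT.1 hH)⟩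

theorem HTEquiv.eqModel_insert_iff {φ ψ : Form α} (hφψ : HTEquiv φ ψ) :
    EqModel (insert φ Γ) T ↔ EqModel (insert ψ Γ) T := by
  have hsat : ∀ H ⊆ T,
      (∀ F ∈ insert φ Γ, htsat H T F) ↔ ∀ F ∈ insert ψ Γ, htsat H T F := fun H hHT => by
    simp only [Set.forall_mem_insert, hφψ H T hHT]
  unfold EqModel
  rw [hsat T subset_rfl]
  exact and_congr_right fun _ => forall₂_congr fun H hHT => not_congr (hsat H hHT.1)

end EquilibriumModels

section Example

variable {α : Type} {f g h : α}

theorem htsat_pair_atom {φ : Form α} {H T : Set α} :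
    (∀ F ∈ ({φ, atom h} : Set (Form α)), htsat H T F) ↔ htsat H T φ ∧ h ∈ H := by
  simp only [Set.forall_mem_insert, Set.mem_singleton_iff, forall_eq, htsat]

theorem htsat_or_ox_atoms (H T : Set α) :
    htsat H T (or (atom f) (ox (atom g) (atom h))) ↔ f ∈ H ∨ g ∈ H ∨ g ∉ T ∧ h ∈ H := by
  simp only [htsat, htsat_ox, csat]

theorem htsat_ox_or_or_atoms (H T : Set α) :
    htsat H T (ox (or (atom f) (atom g)) (or (atom f) (atom h))) ↔
      f ∈ H ∨ g ∈ H ∨ (f ∉ T ∧ g ∉ T) ∧ (f ∈ H ∨ h ∈ H) := by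
  simp only [htsat, htsat_ox, csat, not_or, or_assoc]

theorem eqModel_or_ox_iff (hfg : f ≠ g) (hfh : f ≠ h) (hgh : g ≠ h) (T : Set α) :
    EqModel {or (atom f) (ox (atom g) (atom h)), atom h} T ↔ T = {g, h} ∨ T = {h} := by
  constructor
  · intro hT
    have hhT : h ∈ T := (htsat_pair_atom.mp hT.1).2
    by_cases hgT : g ∈ T
    · refine Or.inl (hT.eq_of_subset (Set.insert_subset_iff.mpr ⟨hgT, by simpa⟩) ?_).symm
      rw [htsat_pair_atom]; simp [htsat_or_ox_atoms]
    · refine Or.inr (hT.eq_of_subset (by simpa) ?_).symm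
      rw [htsat_pair_atom]; simp [htsat_or_ox_atoms, hgT]
  · rintro (rfl | rfl)
    · refine EqModel.of_minimal ?_ fun H hHT hH => ?_
      · rw [htsat_pair_atom]; simp [htsat_or_ox_atoms]
      · obtain ⟨hsat, hhH⟩ := htsat_pair_atom.mp hH
        have hfH : f ∉ H := fun hf => by simpa [hfg, hfh] using hHT hf
        have hgH : g ∈ H := by simpa [htsat_or_ox_atoms, hfH] using hsat
        exact Set.insert_subset_iff.mpr ⟨hgH, by simpa⟩
    · refine EqModel.of_minimal ?_ fun H _ hH => ?_
      · rw [htsat_pair_atom]; simp [htsat_or_ox_atoms, hgh]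
      · simpa using (htsat_pair_atom.mp hH).2

theorem eqModel_ox_or_or (hfg : f ≠ g) (hgh : g ≠ h) :
    EqModel {ox (or (atom f) (atom g)) (or (atom f) (atom h)), atom h} {f, h} := by
  refine EqModel.of_minimal ?_ fun H hHT hH => ?_
  · rw [htsat_pair_atom]; simp [htsat_ox_or_or_atoms]
  · obtain ⟨hsat, hhH⟩ := htsat_pair_atom.mp hH
    have hgH : g ∉ H := fun hg => by simpa [hfg.symm, hgh] using hHT hg
    have hfH : f ∈ H := by simpa [htsat_ox_or_or_atoms, hgH] using hsat
    exact Set.insert_subset_iff.mpr ⟨hfH, by simpa⟩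

end Example

theorem or_no_left_distrib_over_ox {α : Type} (f g h : α)
    (hfg : f ≠ g) (hfh : f ≠ h) (hgh : g ≠ h) :
    ({T : Set α |
        EqModel {Form.or (Form.atom f) (Form.ox (Form.atom g) (Form.atom h)),
                 Form.atom h} T} = {{g, h}, {h}}) ∧
    EqModel {Form.ox (Form.or (Form.atom f) (Form.atom g))
                     (Form.or (Form.atom f) (Form.atom h)),
             Form.atom h} {f, h} ∧
    ¬ HTEquiv (Form.or (Form.atom f) (Form.ox (Form.atom g) (Form.atom h)))
        (Form.ox (Form.or (Form.atom f) (Form.atom g))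
                 (Form.or (Form.atom f) (Form.atom h))) := by
  refine ⟨Set.ext (eqModel_or_ox_iff hfg hfh hgh), eqModel_ox_or_or hfg hgh, fun hequiv => ?_⟩
  have hfh_eq := (eqModel_or_ox_iff hfg hfh hgh {f, h}).mp
    (hequiv.eqModel_insert_iff.mpr (eqModel_ox_or_or hfg hgh))
  have hf_mem : f ∈ ({f, h} : Set α) := Set.mem_insert f {h}
  rcases hfh_eq with hT | hT <;> rw [hT] at hf_mem <;> simp [hfg, hfh] at hf_mem
end
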